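/- arXiv:1808.10677 — 5 statements merged into one kernel-verified Lean document; each statement's English description precedes it below -/
import Mathlib

section
/- If k ∈ ℕ⁶ with (k₁,…,k₅) ≠ (0,…,0) and there exist 0 < s < r < 1 with P_k(r,s) = 2π, then k₁+k₂+k₃+k₄+k₅+k₆ < 6 < 3k₁+3k₂+(3/2)k₃+3k₄+(3/2)k₅+k₆. -/
open Real

lemma arccos_lt_pi' {x : ℝ} (h : -1 < x) : Real.arccos x < π := by
  refine lt_of_le_of_ne (Real.arccos_le_pi x) (fun he => ?_)
  rw [Real.arccos_eq_pi] at he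
  linarith

lemma arccos_half : Real.arccos (1/2) = π/3 := by
  rw [show (1/2 : ℝ) = Real.cos (π/3) by rw [Real.cos_pi_div_three]]
  exact Real.arccos_cos (by positivity) (by linarith [Real.pi_pos])

lemma pi_div_three_lt_arccos {x : ℝ} (h1 : -1 ≤ x) (h2 : x < 1/2) :
    π/3 < Real.arccos x := by
  have := Real.strictAntiOn_arccos ⟨h1, by linarith⟩
    ⟨by norm_num, by norm_num⟩ h2
  rwa [arccos_half] at this

lemma mul_bounds (n : ℕ) {a l u : ℝ} (h1 : l ≤ a) (h2 : a ≤ u) :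
    (n : ℝ) * l ≤ n * a ∧ (n : ℝ) * a ≤ n * u :=
  ⟨mul_le_mul_of_nonneg_left h1 (Nat.cast_nonneg n),
   mul_le_mul_of_nonneg_left h2 (Nat.cast_nonneg n)⟩

lemma mul_bounds_strict {n : ℕ} (hn : n ≠ 0) {a l u : ℝ} (h1 : l < a) (h2 : a < u) :
    (n : ℝ) * l < n * a ∧ (n : ℝ) * a < n * u := by
  have hn' : (0 : ℝ) < n := by exact_mod_cast Nat.pos_of_ne_zero hn
  exact ⟨by nlinarith, by nlinarith⟩

/-- P_k(r,s): weighted sum of the six possible angles at the center of a small disc. -/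
noncomputable def Pk (k : Fin 6 → ℕ) (r s : ℝ) : ℝ :=
  k 0 * Real.arccos (1 - 2/(1+s)^2) +
  k 1 * Real.arccos (1 - 2*r/((r+s)*(1+s))) +
  k 2 * Real.arccos (s/(1+s)) +
  k 3 * Real.arccos (1 - 2*r^2/(r+s)^2) +
  k 4 * Real.arccos (s/(r+s)) +
  k 5 * (π/3)

set_option maxHeartbeats 2000000 in
theorem small_corona_necessary_condition (k : Fin 6 → ℕ)
    (hk : ¬ (k 0 = 0 ∧ k 1 = 0 ∧ k 2 = 0 ∧ k 3 = 0 ∧ k 4 = 0))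
    (h : ∃ r s : ℝ, 0 < s ∧ s < r ∧ r < 1 ∧ Pk k r s = 2 * π) :
    ((k 0 + k 1 + k 2 + k 3 + k 4 + k 5 : ℕ) : ℝ) < 6 ∧
    (6 : ℝ) < 3*(k 0) + 3*(k 1) + (3/2)*(k 2) + 3*(k 3) + (3/2)*(k 4) + (k 5) := by
  obtain ⟨r, s, hs, hsr, hr1, hP⟩ := h
  have hr : 0 < r := hs.trans hsr
  have hrs : 0 < r + s := by linarith
  have h1s : 0 < 1 + s := by linarith
  -- bounds on the five arccos arguments
  -- A0
  have hA0 : π/3 < Real.arccos (1 - 2/(1+s)^2) ∧ Real.arccos (1 - 2/(1+s)^2) < π := by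
    constructor
    · apply pi_div_three_lt_arccos
      · have : 2/(1+s)^2 ≤ 2 := by
          rw [div_le_iff₀ (by positivity)]; nlinarith
        linarith
      · have : (1:ℝ)/2 < 2/(1+s)^2 := by
          rw [div_lt_div_iff₀ (by norm_num) (by positivity)]
          nlinarith
        linarith
    · apply arccos_lt_pi'
      have : 2/(1+s)^2 < 2 := by
        rw [div_lt_iff₀ (by positivity)]; nlinarith
      linarith
  -- A1
  have hA1 : π/3 < Real.arccos (1 - 2*r/((r+s)*(1+s))) ∧
      Real.arccos (1 - 2*r/((r+s)*(1+s))) < π := by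
    constructor
    · apply pi_div_three_lt_arccos
      · have : 2*r/((r+s)*(1+s)) ≤ 2 := by
          rw [div_le_iff₀ (by positivity)]; nlinarith
        linarith
      · have : (1:ℝ)/2 < 2*r/((r+s)*(1+s)) := by
          rw [div_lt_div_iff₀ (by norm_num) (by positivity)]
          nlinarith
        linarith
    · apply arccos_lt_pi'
      have : 2*r/((r+s)*(1+s)) < 2 := by
        rw [div_lt_iff₀ (by positivity)]; nlinarith
      linarith
  -- A2
  have hA2 : π/3 < Real.arccos (s/(1+s)) ∧ Real.arccos (s/(1+s)) < π/2 := by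
    constructor
    · apply pi_div_three_lt_arccos
      · have : (0:ℝ) ≤ s/(1+s) := by positivity
        linarith
      · rw [div_lt_div_iff₀ h1s (by norm_num)]; linarith
    · exact Real.arccos_lt_pi_div_two.2 (by positivity)
  -- A3
  have hA3 : π/3 < Real.arccos (1 - 2*r^2/(r+s)^2) ∧
      Real.arccos (1 - 2*r^2/(r+s)^2) < π := by
    constructor
    · apply pi_div_three_lt_arccos
      · have : 2*r^2/(r+s)^2 ≤ 2 := by
          rw [div_le_iff₀ (by positivity)]; nlinarith
        linarith
      · have : (1:ℝ)/2 < 2*r^2/(r+s)^2 := by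
          rw [div_lt_div_iff₀ (by norm_num) (by positivity)]
          nlinarith
        linarith
    · apply arccos_lt_pi'
      have : 2*r^2/(r+s)^2 < 2 := by
        rw [div_lt_iff₀ (by positivity)]; nlinarith
      linarith
  -- A4
  have hA4 : π/3 < Real.arccos (s/(r+s)) ∧ Real.arccos (s/(r+s)) < π/2 := by
    constructor
    · apply pi_div_three_lt_arccos
      · have : (0:ℝ) ≤ s/(r+s) := by positivity
        linarith
      · rw [div_lt_div_iff₀ hrs (by norm_num)]; linarith
    · exact Real.arccos_lt_pi_div_two.2 (by positivity)
  have hpi := Real.pi_pos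
  -- weak termwise bounds
  have B0 := mul_bounds (k 0) hA0.1.le hA0.2.le
  have B1 := mul_bounds (k 1) hA1.1.le hA1.2.le
  have B2 := mul_bounds (k 2) hA2.1.le hA2.2.le
  have B3 := mul_bounds (k 3) hA3.1.le hA3.2.le
  have B4 := mul_bounds (k 4) hA4.1.le hA4.2.le
  unfold Pk at hP
  -- strict versions depending on which k is nonzero
  have key : (((k 0 : ℝ) + k 1 + k 2 + k 3 + k 4 + k 5) * (π/3) < 2*π) ∧
      (2*π < (k 0 : ℝ) * π + k 1 * π + k 2 * (π/2) + k 3 * π + k 4 * (π/2) + k 5 * (π/3)) := by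
    by_cases h0 : k 0 = 0
    · by_cases h1 : k 1 = 0
      · by_cases h2 : k 2 = 0
        · by_cases h3 : k 3 = 0
          · have h4 : k 4 ≠ 0 := fun h4 => hk ⟨h0, h1, h2, h3, h4⟩
            have S := mul_bounds_strict h4 hA4.1 hA4.2
            constructor <;> [linarith; linarith]
          · have S := mul_bounds_strict h3 hA3.1 hA3.2
            constructor <;> [linarith; linarith]
        · have S := mul_bounds_strict h2 hA2.1 hA2.2
          constructor <;> [linarith; linarith]
      · have S := mul_bounds_strict h1 hA1.1 hA1.2
        constructor <;> [linarith; linarith]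
    · have S := mul_bounds_strict h0 hA0.1 hA0.2
      constructor <;> [linarith; linarith]
  constructor
  · push_cast
    nlinarith [key.1, hpi]
  · nlinarith [key.2, hpi]
end

section
/- If s ∈ (0,1) satisfies 5·arccos(1 - 2/(1+s)²) = 2π, then 5s⁴ + 20s³ + 10s² - 20s + 1 = 0. -/
open Real

theorem corona_11111 (s : ℝ) (hs : s ∈ Set.Ioo (0:ℝ) 1)
    (h : 5 * Real.arccos (1 - 2/(1+s)^2) = 2 * π) :
    5*s^4 + 20*s^3 + 10*s^2 - 20*s + 1 = 0 := by
  obtain ⟨hs0, hs1⟩ := hs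
  have hsp : (0:ℝ) < 1 + s := by linarith
  have hne : (1 + s) ≠ 0 := ne_of_gt hsp
  have hsq : (1:ℝ) < (1+s)^2 := by nlinarith
  have hsq4 : (1+s)^2 < 4 := by nlinarith
  have hx1 : -1 ≤ 1 - 2/(1+s)^2 := by
    have : 2/(1+s)^2 ≤ 2 := by
      rw [div_le_iff₀ (by positivity)]; nlinarith
    linarith
  have hx2 : 1 - 2/(1+s)^2 ≤ 1 := by
    have : 0 < 2/(1+s)^2 := by positivity
    linarith
  have harc : Real.arccos (1 - 2/(1+s)^2) = 2 * π / 5 := by linarith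
  have hcos : 1 - 2/(1+s)^2 = Real.cos (2 * π / 5) := by
    rw [← harc, Real.cos_arccos hx1 hx2]
  have h5 : Real.sqrt 5 ^ 2 = 5 := Real.sq_sqrt (by norm_num)
  have hc25 : Real.cos (2 * π / 5) = (Real.sqrt 5 - 1) / 4 := by
    have h2 : (2:ℝ) * π / 5 = 2 * (π / 5) := by ring
    rw [h2, Real.cos_two_mul, Real.cos_pi_div_five]
    nlinarith [h5]
  rw [hc25] at hcos
  have key : (1 - 2/(1+s)^2) * 4 = Real.sqrt 5 - 1 := by
    rw [hcos]; ring
  have key2 : ((1+s)^2 - 2) * 4 = ((1+s)^2) * (Real.sqrt 5 - 1) := by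
    field_simp at key
    nlinarith [key]
  nlinarith [key2, h5, sq_nonneg ((1+s)^2 * Real.sqrt 5 - 5*(1+s)^2 + 8)]
end

section
/- If s ∈ (0,1) satisfies 4·arccos(1 - 2/(1+s)²) + 2·arccos(s/(1+s)) = 2π (corona 1111s), then s⁴ - 10s² - 8s + 9 = 0. -/
open Real

/-!
Writing the angle condition as `3 α = 2 π - 2 β`, with `cos α = 1 - 2 / (1 + s) ^ 2` and
`cos β = s / (1 + s)`, gives `cos (3 α) = cos (2 β)`. The Chebyshev polynomials
`T₃ = 4X³ - 3X` and `T₂ = 2X² - 1` make this a rational equation in `s`, which after clearing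
the denominator `(1 + s) ^ 6` reads `4 s (s⁴ - 10 s² - 8 s + 9) = 0`.
-/

lemma cos_three_mul_arccos {x : ℝ} (h₁ : -1 ≤ x) (h₂ : x ≤ 1) :
    cos (3 * arccos x) = 4 * x ^ 3 - 3 * x := by
  rw [cos_three_mul, cos_arccos h₁ h₂]

lemma cos_two_mul_arccos {x : ℝ} (h₁ : -1 ≤ x) (h₂ : x ≤ 1) :
    cos (2 * arccos x) = 2 * x ^ 2 - 1 := by
  rw [cos_two_mul, cos_arccos h₁ h₂]

lemma one_sub_two_div_one_add_sq_mem_Icc {s : ℝ} (hs : 0 ≤ s) :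
    1 - 2 / (1 + s) ^ 2 ∈ Set.Icc (-1 : ℝ) 1 := by
  have hpos : 0 < 2 / (1 + s) ^ 2 := by positivity
  have hle : 2 / (1 + s) ^ 2 ≤ 2 := div_le_self zero_le_two (one_le_pow₀ (by linarith))
  constructor <;> linarith

lemma div_one_add_self_mem_Icc {s : ℝ} (hs : 0 ≤ s) :
    s / (1 + s) ∈ Set.Icc (-1 : ℝ) 1 := by
  have hnonneg : 0 ≤ s / (1 + s) := by positivity
  have hle : s / (1 + s) ≤ 1 := (div_le_one (by linarith)).2 (by linarith)
  constructor <;> linarith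

lemma corona_1111s_chebyshev_identity {s : ℝ} (hs : 1 + s ≠ 0) :
    (1 + s) ^ 6 * ((4 * (1 - 2 / (1 + s) ^ 2) ^ 3 - 3 * (1 - 2 / (1 + s) ^ 2))
      - (2 * (s / (1 + s)) ^ 2 - 1)) = 4 * s * (s ^ 4 - 10 * s ^ 2 - 8 * s + 9) := by
  field_simp
  ring

theorem corona_1111s (s : ℝ) (hs : s ∈ Set.Ioo (0:ℝ) 1)
    (h : 3 * Real.arccos (1 - 2/(1+s)^2) + 2 * Real.arccos (s/(1+s)) = 2 * π) :
    s^4 - 10*s^2 - 8*s + 9 = 0 := by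
  have hs₀ : 0 < s := hs.1
  obtain ⟨hx₁, hx₂⟩ := one_sub_two_div_one_add_sq_mem_Icc hs₀.le
  obtain ⟨hy₁, hy₂⟩ := div_one_add_self_mem_Icc hs₀.le
  have hcos : cos (3 * arccos (1 - 2 / (1 + s) ^ 2)) = cos (2 * arccos (s / (1 + s))) := by
    rw [eq_sub_of_add_eq h, cos_two_pi_sub]
  rw [cos_three_mul_arccos hx₁ hx₂, cos_two_mul_arccos hy₁ hy₂] at hcos
  have hzero := corona_1111s_chebyshev_identity (s := s) (by positivity)
  rw [hcos, sub_self, mul_zero, eq_comm] at hzero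
  exact (mul_eq_zero.mp hzero).resolve_left (by positivity)
end

section
/- If s ∈ (0,1) satisfies 2·arccos(1 - 2/(1+s)²) + 2·arccos(s/(1+s)) + π/3 = 2π (corona 11sss: two unit discs and three s-discs around a disc of radius s, with angle vector (1,0,2,0,0,2) giving ∠1s1 + 2∠1ss + 2∠sss = 2π where ∠sss = π/3), then 9s⁴ - 12s³ - 26s² - 12s + 9 = 0. -/
/-! Writing `x = 1 - 2/(1+s)²` and `c = s/(1+s)`, the corona condition says
`arccos x = 4π/3 - 2 arccos c`. Taking cosines gives `x + c² - 1/2 = -√3 c √(1 - c²)`; squaring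
removes the radicals, and clearing the denominator `(1+s)⁴` leaves the quartic. -/

open Real

theorem Real.cos_four_pi_div_three_sub (y : ℝ) :
    cos (4 * π / 3 - y) = -(cos y / 2 + √3 / 2 * sin y) := by
  rw [show 4 * π / 3 - y = π / 3 - y + π by ring, cos_add_pi, cos_sub, cos_pi_div_three,
    sin_pi_div_three]
  ring

theorem Real.sq_add_sq_sub_half_eq_of_arccos_add_two_mul_arccos {x c : ℝ}
    (hx₁ : -1 ≤ x) (hx₂ : x ≤ 1) (hc₁ : -1 ≤ c) (hc₂ : c ≤ 1)
    (h : arccos x + 2 * arccos c = 4 * π / 3) :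
    (x + c ^ 2 - 1 / 2) ^ 2 = 3 * c ^ 2 * (1 - c ^ 2) := by
  have hx : x = -((2 * c ^ 2 - 1) / 2 + √3 * c * √(1 - c ^ 2)) := by
    rw [← cos_arccos hx₁ hx₂, show arccos x = 4 * π / 3 - 2 * arccos c by linarith,
      cos_four_pi_div_three_sub, cos_two_mul, sin_two_mul, cos_arccos hc₁ hc₂, sin_arccos]
    ring
  have h3 : √3 ^ 2 = 3 := sq_sqrt (by norm_num)
  have hc : √(1 - c ^ 2) ^ 2 = 1 - c ^ 2 := sq_sqrt (by nlinarith)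
  rw [hx]
  linear_combination c ^ 2 * √(1 - c ^ 2) ^ 2 * h3 + 3 * c ^ 2 * hc

theorem corona_11sss (s : ℝ) (hs : s ∈ Set.Ioo (0:ℝ) 1)
    (h : Real.arccos (1 - 2/(1+s)^2) + 2 * Real.arccos (s/(1+s)) + 2 * (π/3) = 2 * π) :
    9*s^4 - 12*s^3 - 26*s^2 - 12*s + 9 = 0 := by
  have hs₀ : 0 < s := hs.1
  have hsq : 2 / (1 + s) ^ 2 ≤ 2 := div_le_self zero_le_two (by nlinarith)
  have key := sq_add_sq_sub_half_eq_of_arccos_add_two_mul_arccos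
    (x := 1 - 2 / (1 + s) ^ 2) (c := s / (1 + s)) (by linarith)
    (by linarith [show 0 < 2 / (1 + s) ^ 2 by positivity])
    (by linarith [show 0 ≤ s / (1 + s) by positivity])
    (div_le_one_of_le₀ (by linarith) (by positivity)) (by linarith)
  field_simp at key
  linear_combination key
end

section
/- A small corona around a disc of radius s containing at least one disc of radius r > s or radius 1 consists of at most 5 discs: if k ∈ ℕ⁶ with k₁+k₂+k₃+k₄+k₅ ≥ 1 and P_k(r,s) = 2π for some 0 < s < r < 1, then k₁+k₂+k₃+k₄+k₆+k₅ ≤ 5. -/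
open Real

theorem small_corona_at_most_five (k : Fin 6 → ℕ)
    (hk : 1 ≤ k 0 + k 1 + k 2 + k 3 + k 4)
    (r s : ℝ) (hs : 0 < s) (hsr : s < r) (hr : r < 1)
    (h : Pk k r s = 2 * π) :
    k 0 + k 1 + k 2 + k 3 + k 4 + k 5 ≤ 5 := by
  have key : ∀ x : ℝ, -1 ≤ x → x < 1/2 → π/3 < Real.arccos x := by
    intro x h1 h2
    have h3 : Real.arccos (1/2) = π/3 := by
      rw [← Real.cos_pi_div_three]
      exact Real.arccos_cos (by positivity) (by linarith [Real.pi_pos])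
    rw [← h3]
    exact Real.strictAntiOn_arccos ⟨h1, by linarith⟩ ⟨by norm_num, by norm_num⟩ h2
  have hrs : (0:ℝ) < r + s := by linarith
  have h1s : (0:ℝ) < 1 + s := by linarith
  have ha0 : π/3 < Real.arccos (1 - 2/(1+s)^2) := by
    apply key
    · have : 2/(1+s)^2 ≤ 2 := by rw [div_le_iff₀ (by positivity)]; nlinarith
      linarith
    · have : (1:ℝ)/2 < 2/(1+s)^2 := by rw [div_lt_div_iff₀ (by norm_num) (by positivity)]; nlinarith
      linarith
  have ha1 : π/3 < Real.arccos (1 - 2*r/((r+s)*(1+s))) := by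
    apply key
    · have : 2*r/((r+s)*(1+s)) ≤ 2 := by rw [div_le_iff₀ (by positivity)]; nlinarith
      linarith
    · have : (1:ℝ)/2 < 2*r/((r+s)*(1+s)) := by
        rw [div_lt_div_iff₀ (by norm_num) (by positivity)]; nlinarith
      linarith
  have ha2 : π/3 < Real.arccos (s/(1+s)) := by
    apply key
    · have : (0:ℝ) ≤ s/(1+s) := by positivity
      linarith
    · rw [div_lt_div_iff₀ h1s (by norm_num : (0:ℝ) < 2)]; linarith
  have ha3 : π/3 < Real.arccos (1 - 2*r^2/(r+s)^2) := by
    apply key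
    · have : 2*r^2/(r+s)^2 ≤ 2 := by rw [div_le_iff₀ (by positivity)]; nlinarith
      linarith
    · have : (1:ℝ)/2 < 2*r^2/(r+s)^2 := by
        rw [div_lt_div_iff₀ (by norm_num) (by positivity)]
        nlinarith [mul_pos (show (0:ℝ) < r - s by linarith) (show (0:ℝ) < 3*r + s by linarith)]
      linarith
  have ha4 : π/3 < Real.arccos (s/(r+s)) := by
    apply key
    · have : (0:ℝ) ≤ s/(r+s) := by positivity
      linarith
    · rw [div_lt_div_iff₀ hrs (by norm_num : (0:ℝ) < 2)]; linarith
  by_contra hn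
  push_neg at hn
  have hn6 : 6 ≤ k 0 + k 1 + k 2 + k 3 + k 4 + k 5 := by omega
  have hn6' : (6:ℝ) ≤ (k 0:ℝ) + k 1 + k 2 + k 3 + k 4 + k 5 := by exact_mod_cast hn6
  unfold Pk at h
  set a0 := Real.arccos (1 - 2/(1+s)^2)
  set a1 := Real.arccos (1 - 2*r/((r+s)*(1+s)))
  set a2 := Real.arccos (s/(1+s))
  set a3 := Real.arccos (1 - 2*r^2/(r+s)^2)
  set a4 := Real.arccos (s/(r+s))
  have t0 := mul_le_mul_of_nonneg_left ha0.le (Nat.cast_nonneg (k 0) : (0:ℝ) ≤ k 0)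
  have t1 := mul_le_mul_of_nonneg_left ha1.le (Nat.cast_nonneg (k 1) : (0:ℝ) ≤ k 1)
  have t2 := mul_le_mul_of_nonneg_left ha2.le (Nat.cast_nonneg (k 2) : (0:ℝ) ≤ k 2)
  have t3 := mul_le_mul_of_nonneg_left ha3.le (Nat.cast_nonneg (k 3) : (0:ℝ) ≤ k 3)
  have t4 := mul_le_mul_of_nonneg_left ha4.le (Nat.cast_nonneg (k 4) : (0:ℝ) ≤ k 4)
  have hpi := Real.pi_pos
  have hsum : 6*(π/3) ≤ ((k 0:ℝ)+k 1+k 2+k 3+k 4+k 5)*(π/3) :=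
    mul_le_mul_of_nonneg_right hn6' (by positivity)
  have hsum' : ((k 0:ℝ)+k 1+k 2+k 3+k 4+k 5)*(π/3)
      = (k 0:ℝ)*(π/3)+(k 1:ℝ)*(π/3)+(k 2:ℝ)*(π/3)+(k 3:ℝ)*(π/3)+(k 4:ℝ)*(π/3)+(k 5:ℝ)*(π/3) := by
    ring
  have h5 : 1 ≤ k 0 ∨ 1 ≤ k 1 ∨ 1 ≤ k 2 ∨ 1 ≤ k 3 ∨ 1 ≤ k 4 := by omega
  rcases h5 with hj | hj | hj | hj | hj
  · have hj' : (1:ℝ) ≤ k 0 := by exact_mod_cast hj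
    have e1 : (1:ℝ) * (a0 - π/3) ≤ (k 0:ℝ) * (a0 - π/3) :=
      mul_le_mul_of_nonneg_right hj' (by linarith)
    have e2 : (k 0:ℝ) * (a0 - π/3) = (k 0:ℝ)*a0 - (k 0:ℝ)*(π/3) := by ring
    linarith
  · have hj' : (1:ℝ) ≤ k 1 := by exact_mod_cast hj
    have e1 : (1:ℝ) * (a1 - π/3) ≤ (k 1:ℝ) * (a1 - π/3) :=
      mul_le_mul_of_nonneg_right hj' (by linarith)
    have e2 : (k 1:ℝ) * (a1 - π/3) = (k 1:ℝ)*a1 - (k 1:ℝ)*(π/3) := by ring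
    linarith
  · have hj' : (1:ℝ) ≤ k 2 := by exact_mod_cast hj
    have e1 : (1:ℝ) * (a2 - π/3) ≤ (k 2:ℝ) * (a2 - π/3) :=
      mul_le_mul_of_nonneg_right hj' (by linarith)
    have e2 : (k 2:ℝ) * (a2 - π/3) = (k 2:ℝ)*a2 - (k 2:ℝ)*(π/3) := by ring
    linarith
  · have hj' : (1:ℝ) ≤ k 3 := by exact_mod_cast hj
    have e1 : (1:ℝ) * (a3 - π/3) ≤ (k 3:ℝ) * (a3 - π/3) :=
      mul_le_mul_of_nonneg_right hj' (by linarith)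
    have e2 : (k 3:ℝ) * (a3 - π/3) = (k 3:ℝ)*a3 - (k 3:ℝ)*(π/3) := by ring
    linarith
  · have hj' : (1:ℝ) ≤ k 4 := by exact_mod_cast hj
    have e1 : (1:ℝ) * (a4 - π/3) ≤ (k 4:ℝ) * (a4 - π/3) :=
      mul_le_mul_of_nonneg_right hj' (by linarith)
    have e2 : (k 4:ℝ) * (a4 - π/3) = (k 4:ℝ)*a4 - (k 4:ℝ)*(π/3) := by ring
    linarith
end
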